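/- arXiv:2404.14839 — 3 statements merged into one kernel-verified Lean document; each statement's English description precedes it below -/
import Mathlib

section
/- Let Q_n be the hypercube graph of dimension n with n ≥ 2. Then the distance-2 chromatic number satisfies χ_2(Q_n) ≥ n + 2 if n is even, and χ_2(Q_n) ≥ n + 1 if n is odd. -/
open Finset Polynomial

/-- The `t`-th power graph: vertices are adjacent when they are distinct and at
graph (geodesic) distance at most `t` in `G`. -/
def powerGraph {V : Type*} (G : SimpleGraph V) (t : ℕ) : SimpleGraph V where
  Adj u v := u ≠ v ∧ G.Reachable u v ∧ G.dist u v ≤ t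
  symm := ⟨by
    rintro u v ⟨h1, h2, h3⟩
    exact ⟨h1.symm, h2.symm, by rwa [SimpleGraph.dist_comm]⟩⟩
  loopless := ⟨fun v h => h.1 rfl⟩

/-- The distance-`t` chromatic number of a graph. -/
noncomputable def distChromaticNumber {V : Type*} (G : SimpleGraph V) (t : ℕ) : ℕ∞ :=
  (powerGraph G t).chromaticNumber

/-- `x` is an eigenvalue of the (real) adjacency matrix of `G`. -/
def IsAdjEigenvalue {V : Type*} [Fintype V] [DecidableEq V] (G : SimpleGraph V)
    [DecidableRel G.Adj] (x : ℝ) : Prop :=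
  ∃ v : V → ℝ, v ≠ 0 ∧ (SimpleGraph.adjMatrix ℝ G).mulVec v = x • v

/-- The hypercube graph `Q_n`. -/
def hypercube (n : ℕ) : SimpleGraph (Fin n → Fin 2) where
  Adj u v := hammingDist u v = 1
  symm := ⟨fun u v h => by (try simp only at h ⊢); rwa [hammingDist_comm]⟩
  loopless := ⟨fun u h => by simp only [hammingDist_self] at h; exact absurd h (by norm_num)⟩

noncomputable instance (n : ℕ) : DecidableRel (hypercube n).Adj :=
  fun _ _ => Classical.dec _

/-- The Lee graph `G(n,q)`: the `n`-fold Cartesian product of the `q`-cycle. -/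
def leeGraph (n q : ℕ) : SimpleGraph (Fin n → ZMod q) where
  Adj u v := u ≠ v ∧ ∃ i, (u i = v i + 1 ∨ v i = u i + 1) ∧ ∀ j, j ≠ i → u j = v j
  symm := ⟨by
    rintro u v ⟨hne, i, h, hj⟩
    exact ⟨hne.symm, i, h.symm, fun j hji => (hj j hji).symm⟩⟩
  loopless := ⟨fun u h => h.1 rfl⟩

noncomputable instance (n q : ℕ) : DecidableRel (leeGraph n q).Adj :=
  fun _ _ => Classical.dec _

/-- The Lee distance on `(ℤ/qℤ)^n`. -/
def leeDist {n q : ℕ} (b c : Fin n → ZMod q) : ℕ :=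
  ∑ i, min ((b i - c i).val) (q - (b i - c i).val)


namespace Stmt4Aux

variable {n : ℕ}

lemma fin2_add_one_ne (x : Fin 2) : x + 1 ≠ x := by revert x; decide

lemma fin2_eq_add_one {x y : Fin 2} (h : x ≠ y) : x = y + 1 := by revert x y; decide

lemma hd_eq (x y : Fin n → Fin 2) :
    hammingDist x y = (Finset.univ.filter fun i => x i ≠ y i).card := rfl

/-- The closed ball of radius 1 around `v`. -/
def ball (v : Fin n → Fin 2) : Finset (Fin n → Fin 2) :=
  Finset.univ.filter fun u => hammingDist u v ≤ 1

lemma mem_ball {u v : Fin n → Fin 2} : u ∈ ball v ↔ hammingDist u v ≤ 1 := by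
  simp [ball]

lemma ball_comm {u v : Fin n → Fin 2} : u ∈ ball v ↔ v ∈ ball u := by
  simp [mem_ball, hammingDist_comm]

/-- Flip the `i`-th coordinate. -/
def flip (v : Fin n → Fin 2) (i : Fin n) : Fin n → Fin 2 :=
  Function.update v i (v i + 1)

lemma hd_flip (v : Fin n → Fin 2) (i : Fin n) : hammingDist (flip v i) v = 1 := by
  rw [hd_eq]
  have : (Finset.univ.filter fun j => flip v i j ≠ v j) = {i} := by
    ext j
    by_cases h : j = i
    · subst h; rw [Finset.mem_filter]; simp [flip, fin2_add_one_ne]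
    · rw [Finset.mem_filter]; simp [flip, Function.update_of_ne h, h]
  rw [this, Finset.card_singleton]

lemma flip_injective (v : Fin n → Fin 2) : Function.Injective (flip v) := by
  intro i j h
  by_contra hne
  have h1 := congrFun h i
  rw [flip, flip, Function.update_self, Function.update_of_ne hne] at h1
  exact fin2_add_one_ne (v i) h1

lemma ball_eq (v : Fin n → Fin 2) :
    ball v = insert v (Finset.univ.image (flip v)) := by
  ext u
  simp only [mem_ball, Finset.mem_insert, Finset.mem_image, Finset.mem_univ, true_and]
  constructor
  · intro h
    rcases Nat.lt_or_ge (hammingDist u v) 1 with h0 | h1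
    · left; exact eq_of_hammingDist_eq_zero (Nat.lt_one_iff.mp h0)
    · right
      have h2 : hammingDist u v = 1 := le_antisymm h h1
      rw [hd_eq] at h2
      obtain ⟨i, hi⟩ := Finset.card_eq_one.mp h2
      have hmem : ∀ j, u j ≠ v j ↔ j = i := by
        intro j
        rw [← Finset.mem_singleton, ← hi, Finset.mem_filter]
        simp
      refine ⟨i, ?_⟩
      funext j
      by_cases hj : j = i
      · subst hj
        rw [flip, Function.update_self]
        exact (fin2_eq_add_one ((hmem j).mpr rfl)).symm
      · rw [flip, Function.update_of_ne hj]
        exact (not_not.mp (fun hne => hj ((hmem j).mp hne))).symm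
  · rintro (rfl | ⟨i, rfl⟩)
    · simp
    · rw [hd_flip]

lemma card_ball (v : Fin n → Fin 2) : (ball v).card = n + 1 := by
  rw [ball_eq, Finset.card_insert_of_notMem, Finset.card_image_of_injective _ (flip_injective v)]
  · simp
  · intro hmem
    obtain ⟨i, _, hi⟩ := Finset.mem_image.mp hmem
    have := hd_flip v i
    rw [hi, hammingDist_self] at this
    simp at this

lemma pow_adj {u w : Fin n → Fin 2} (hne : u ≠ w) (hd : hammingDist u w ≤ 2) :
    (powerGraph (hypercube n) 2).Adj u w := by
  suffices h : ∃ p : (hypercube n).Walk u w, p.length ≤ 2 by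
    obtain ⟨p, hp⟩ := h
    exact ⟨hne, ⟨p⟩, le_trans (SimpleGraph.dist_le p) hp⟩
  have h1 : 0 < hammingDist u w := hammingDist_pos.mpr hne
  rcases (by omega : hammingDist u w = 1 ∨ hammingDist u w = 2) with h2 | h2
  · exact ⟨SimpleGraph.Walk.cons (show (hypercube n).Adj u w from h2) SimpleGraph.Walk.nil,
      by simp⟩
  · rw [hd_eq] at h2
    have hpos : (Finset.univ.filter fun i => u i ≠ w i).Nonempty := by
      rw [← Finset.card_pos, h2]; omega
    obtain ⟨i, hi⟩ := hpos
    have hiu : u i ≠ w i := (Finset.mem_filter.mp hi).2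
    set m := Function.update u i (w i) with hm
    have ha : (hypercube n).Adj u m := by
      show hammingDist u m = 1
      rw [hd_eq]
      have : (Finset.univ.filter fun j => u j ≠ m j) = {i} := by
        ext j
        by_cases h : j = i
        · subst h; simp [hm, hiu]
        · simp [hm, Function.update_of_ne h, h]
      rw [this, Finset.card_singleton]
    have hb : (hypercube n).Adj m w := by
      show hammingDist m w = 1
      rw [hd_eq]
      have : (Finset.univ.filter fun j => m j ≠ w j)
          = (Finset.univ.filter fun j => u j ≠ w j).erase i := by
        ext j
        by_cases h : j = i
        · subst h; simp [hm]
        · simp [hm, Function.update_of_ne h, h]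
      rw [this, Finset.card_erase_of_mem hi, h2]
    exact ⟨SimpleGraph.Walk.cons ha (SimpleGraph.Walk.cons hb SimpleGraph.Walk.nil), by simp⟩

lemma ball_clique (v : Fin n → Fin 2) :
    (powerGraph (hypercube n) 2).IsClique (ball v : Finset (Fin n → Fin 2)) := by
  intro u hu w hw hne
  apply pow_adj hne
  calc hammingDist u w ≤ hammingDist u v + hammingDist v w := hammingDist_triangle _ _ _
    _ ≤ 1 + 1 := by
        refine Nat.add_le_add (mem_ball.mp hu) ?_
        rw [hammingDist_comm]; exact mem_ball.mp hw
    _ = 2 := rfl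

lemma not_colorable (hn : 2 ≤ n) (he : Even n) :
    ¬ (powerGraph (hypercube n) 2).Colorable (n + 1) := by
  rintro ⟨C⟩
  classical
  have hinj : ∀ v : Fin n → Fin 2, Set.InjOn C (ball v) := by
    intro v u hu w hw h
    by_contra hne
    exact C.valid (ball_clique v hu hw hne) h
  have hexists : ∀ (v : Fin n → Fin 2) (c : Fin (n + 1)), ∃ u ∈ ball v, C u = c := by
    intro v c
    have himg : (ball v).image C = Finset.univ := by
      apply Finset.eq_univ_of_card
      rw [Finset.card_image_of_injOn (hinj v), card_ball]
      simp
    have : c ∈ (ball v).image C := himg ▸ Finset.mem_univ c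
    simpa using Finset.mem_image.mp this
  set c0 : Fin (n + 1) := ⟨0, by omega⟩ with hc0
  choose f hf1 hf2 using fun v => hexists v c0
  have huniq : ∀ v u, u ∈ ball v → C u = c0 → u = f v := by
    intro v u hu hc
    exact hinj v hu (hf1 v) (hc.trans (hf2 v).symm)
  set S : Finset (Fin n → Fin 2) := Finset.univ.filter (fun u => C u = c0) with hS
  have hcount : (Finset.univ : Finset (Fin n → Fin 2)).card
      = ∑ u ∈ S, (Finset.univ.filter (fun v => f v = u)).card := by
    apply Finset.card_eq_sum_card_fiberwise
    intro v _
    simp only [hS, Finset.coe_filter, Set.mem_setOf_eq]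
    exact ⟨Finset.mem_univ _, hf2 v⟩
  have hfib : ∀ u ∈ S, (Finset.univ.filter (fun v => f v = u)).card = n + 1 := by
    intro u hu
    have hc : C u = c0 := (Finset.mem_filter.mp hu).2
    have heq : Finset.univ.filter (fun v => f v = u) = ball u := by
      ext v
      simp only [Finset.mem_filter, Finset.mem_univ, true_and]
      constructor
      · rintro rfl
        exact ball_comm.mp (hf1 v)
      · intro hv
        exact (huniq v u (ball_comm.mp hv) hc).symm
    rw [heq, card_ball]
  have h2n : 2 ^ n = S.card * (n + 1) := by
    have hcu : (Finset.univ : Finset (Fin n → Fin 2)).card = 2 ^ n := by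
      simp [Finset.card_univ]
    rw [← hcu, hcount, Finset.sum_congr rfl hfib, Finset.sum_const, smul_eq_mul]
  have hdvd : (n + 1) ∣ 2 ^ n := ⟨S.card, by rw [h2n, Nat.mul_comm]⟩
  have hodd : Odd (n + 1) := Even.add_one he
  have := Nat.Coprime.eq_one_of_dvd (Nat.Coprime.pow_right n hodd.coprime_two_right) hdvd
  omega

end Stmt4Aux

/-- for `n ≥ 2`, `χ₂(Q_n) ≥ n + 2` if `n` is even and
`χ₂(Q_n) ≥ n + 1` if `n` is odd. -/
theorem stmt4 (n : ℕ) (hn : 2 ≤ n) :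
    (Even n → ((n : ℕ∞) + 2) ≤ distChromaticNumber (hypercube n) 2) ∧
    (Odd n → ((n : ℕ∞) + 1) ≤ distChromaticNumber (hypercube n) 2) := by
  have key : ((n : ℕ∞) + 1) ≤ distChromaticNumber (hypercube n) 2 := by
    have v : Fin n → Fin 2 := fun _ => 0
    have h := (Stmt4Aux.ball_clique v).card_le_chromaticNumber
    rw [Stmt4Aux.card_ball] at h
    rw [distChromaticNumber]
    calc ((n : ℕ∞) + 1) = ((n + 1 : ℕ) : ℕ∞) := by push_cast; ring
      _ ≤ _ := h
  constructor
  · intro he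
    have hnc := Stmt4Aux.not_colorable hn he
    rw [distChromaticNumber]
    have h1 : ¬ ((powerGraph (hypercube n) 2).chromaticNumber ≤ ((n + 1 : ℕ) : ℕ∞)) :=
      fun h => hnc (SimpleGraph.chromaticNumber_le_iff_colorable.mp h)
    have h2 : ((n + 1 : ℕ) : ℕ∞) < (powerGraph (hypercube n) 2).chromaticNumber :=
      lt_of_not_ge h1
    calc ((n : ℕ∞) + 2) = ((n + 1 : ℕ) : ℕ∞) + 1 := by push_cast; ring
      _ ≤ _ := (ENat.add_one_le_iff (by exact_mod_cast ENat.coe_ne_top (n+1))).mpr h2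
  · intro _
    exact key
end

section
/- Let Q_n be the hypercube graph of dimension n with adjacency matrix A, let k be a natural number, and let u be any vertex of Q_n. Then (A^k)_{uu} = (1/2^n) · Σ_{j=0}^{n} C(n,j) · (n − 2j)^k, where C(n,j) denotes the binomial coefficient. -/
/-!
The characters `χ_S(u) = ∏_{i ∈ S} (-1)^{u_i}` of `(ℤ/2)^n`, one for each `S ⊆ [n]`, are
eigenvectors of the adjacency matrix `A` of `Q_n`: flipping coordinate `i` multiplies `χ_S` by
`-1` exactly when `i ∈ S`, so `A χ_S = (n - 2|S|) χ_S`. They are orthogonal,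
`∑_S χ_S(u) χ_S(v) = 2^n δ_{uv}`, and `χ_S(u)² = 1`, hence
`2^n (A^k)_{uu} = ∑_S χ_S(u)² (n - 2|S|)^k = ∑_S (n - 2|S|)^k`; grouping the `S` by size gives
the binomial sum.
-/

open Finset Polynomial

lemma neg_one_pow_val_add (a b : Fin 2) :
    (-1 : ℝ) ^ (a + b).val = (-1) ^ a.val * (-1) ^ b.val := by
  rw [Fin.val_add, ← neg_one_pow_eq_pow_mod_two, pow_add]

lemma hammingNorm_eq_one_iff {ι : Type*} [Fintype ι] [DecidableEq ι] {d : ι → Fin 2} :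
    hammingNorm d = 1 ↔ ∃ i, Pi.single i 1 = d := by
  simp only [hammingNorm, Finset.card_eq_one, Finset.ext_iff, funext_iff, Finset.mem_filter,
    Finset.mem_univ, true_and, Finset.mem_singleton]
  refine exists_congr fun i => forall_congr' fun j => ?_
  generalize d j = a
  by_cases hj : j = i
  · subst hj; fin_cases a <;> simp
  · fin_cases a <;> simp [hj]

lemma hypercube_neighborFinset (n : ℕ) (u : Fin n → Fin 2) :
    (hypercube n).neighborFinset u = Finset.univ.image fun i => u + Pi.single i 1 := by
  ext w
  simp only [SimpleGraph.mem_neighborFinset, Finset.mem_image, Finset.mem_univ, true_and]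
  change hammingDist u w = 1 ↔ _
  rw [hammingDist_eq_hammingNorm, hammingNorm_eq_one_iff]
  exact exists_congr fun i => eq_neg_add_iff_add_eq

/-- Its columns are the characters of `(ℤ/2)^n`, indexed by their supports. -/
def walshMatrix (n : ℕ) : Matrix (Fin n → Fin 2) (Finset (Fin n)) ℝ :=
  Matrix.of fun u S => ∏ i ∈ S, (-1 : ℝ) ^ (u i).val

lemma walshMatrix_add {n : ℕ} (u v : Fin n → Fin 2) (S : Finset (Fin n)) :
    walshMatrix n (u + v) S = walshMatrix n u S * walshMatrix n v S := by
  simp only [walshMatrix, Matrix.of_apply, Pi.add_apply, neg_one_pow_val_add,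
    Finset.prod_mul_distrib]

lemma walshMatrix_single {n : ℕ} (i : Fin n) (S : Finset (Fin n)) :
    walshMatrix n (Pi.single i 1) S = if i ∈ S then -1 else 1 := by
  simp only [walshMatrix, Matrix.of_apply, Pi.single_apply, apply_ite, Fin.val_one, Fin.val_zero,
    pow_one, pow_zero, Finset.prod_ite_eq']
  split_ifs <;> rfl

lemma one_add_neg_one_pow_val_add (a b : Fin 2) :
    1 + (-1 : ℝ) ^ (a + b).val = if a = b then 2 else 0 := by
  fin_cases a <;> fin_cases b <;> norm_num [Fin.val_add]

lemma walshMatrix_mul_self {n : ℕ} (u : Fin n → Fin 2) (S : Finset (Fin n)) :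
    walshMatrix n u S * walshMatrix n u S = 1 := by
  simp only [walshMatrix, Matrix.of_apply, ← Finset.prod_mul_distrib, ← pow_add, ← two_mul,
    pow_mul, neg_one_sq, one_pow, Finset.prod_const_one]

lemma walshMatrix_mul_transpose (n : ℕ) :
    walshMatrix n * (walshMatrix n).transpose = (2 ^ n : ℝ) • 1 := by
  ext u v
  have hsum : ∑ S, walshMatrix n (u + v) S = ∏ i, (1 + (-1 : ℝ) ^ (u i + v i).val) := by
    rw [Finset.prod_one_add, Finset.powerset_univ]
    rfl
  simp only [Matrix.mul_apply, Matrix.transpose_apply, ← walshMatrix_add, hsum,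
    one_add_neg_one_pow_val_add, Fintype.prod_ite_zero, ← funext_iff, Matrix.smul_apply,
    Matrix.one_apply, Finset.prod_const, Finset.card_univ, Fintype.card_fin, smul_eq_mul, mul_ite,
    mul_one, mul_zero]

lemma sum_ite_mem_neg_one_one {ι : Type*} [Fintype ι] [DecidableEq ι] (S : Finset ι) :
    ∑ i, (if i ∈ S then -1 else 1 : ℝ) = Fintype.card ι - 2 * S.card := by
  have h (i : ι) : (if i ∈ S then -1 else 1 : ℝ) = 1 - 2 * if i ∈ S then 1 else 0 := by
    split_ifs <;> norm_num
  rw [Finset.sum_congr rfl fun i _ => h i, Finset.sum_sub_distrib, ← Finset.mul_sum,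
    Finset.sum_boole]
  simp

-- Without the binder type, `*` elaborates to multiplication of `CStarMatrix`.
lemma adjMatrix_hypercube_mul_walshMatrix (n : ℕ) :
    (hypercube n).adjMatrix ℝ * walshMatrix n
      = walshMatrix n * Matrix.diagonal fun S : Finset (Fin n) => (n : ℝ) - 2 * S.card := by
  ext u S
  rw [Matrix.mul_apply', SimpleGraph.adjMatrix_dotProduct, hypercube_neighborFinset,
    Finset.sum_image]
  · simp only [walshMatrix_add, walshMatrix_single, ← Finset.mul_sum, sum_ite_mem_neg_one_one,
      Fintype.card_fin, Matrix.mul_diagonal]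
  · intro i _ j _ h
    by_contra hij
    simpa [hij] using congrFun (add_left_cancel h) i

lemma walshMatrix_mul_diagonal_mul_transpose_apply_self {n : ℕ} (e : Finset (Fin n) → ℝ)
    (u : Fin n → Fin 2) :
    (walshMatrix n * Matrix.diagonal e * (walshMatrix n).transpose) u u = ∑ S, e S := by
  rw [Matrix.mul_apply]
  simp only [Matrix.mul_diagonal, Matrix.transpose_apply, mul_right_comm _ (e _),
    walshMatrix_mul_self, one_mul]

lemma adjMatrix_hypercube_pow_mul_walshMatrix (n k : ℕ) :
    (hypercube n).adjMatrix ℝ ^ k * walshMatrix n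
      = walshMatrix n * (Matrix.diagonal fun S : Finset (Fin n) => (n : ℝ) - 2 * S.card) ^ k := by
  induction k with
  | zero => simp
  | succ k ih =>
    rw [pow_succ', Matrix.mul_assoc, ih, ← Matrix.mul_assoc, adjMatrix_hypercube_mul_walshMatrix,
      Matrix.mul_assoc, ← pow_succ']

lemma two_pow_mul_adjMatrix_hypercube_pow_apply_self (n k : ℕ) (u : Fin n → Fin 2) :
    2 ^ n * ((hypercube n).adjMatrix ℝ ^ k) u u
      = ∑ S : Finset (Fin n), ((n : ℝ) - 2 * S.card) ^ k := by
  calc 2 ^ n * ((hypercube n).adjMatrix ℝ ^ k) u u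
      = ((hypercube n).adjMatrix ℝ ^ k * (walshMatrix n * (walshMatrix n).transpose)) u u := by
        rw [walshMatrix_mul_transpose, Matrix.mul_smul, Matrix.mul_one, Matrix.smul_apply,
          smul_eq_mul]
    _ = ∑ S : Finset (Fin n), ((n : ℝ) - 2 * S.card) ^ k := by
        rw [← Matrix.mul_assoc, adjMatrix_hypercube_pow_mul_walshMatrix, Matrix.diagonal_pow,
          walshMatrix_mul_diagonal_mul_transpose_apply_self]
        simp only [Pi.pow_apply]

/-- diagonal entries of powers of the adjacency matrix of `Q_n`:
`(A^k)_{uu} = 2^{-n} ∑_{j=0}^n C(n,j) (n − 2j)^k`. -/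
theorem stmt6 (n k : ℕ) (u : Fin n → Fin 2) :
    (SimpleGraph.adjMatrix ℝ (hypercube n) ^ k) u u
      = (1 / 2 ^ n) * ∑ j ∈ Finset.range (n + 1),
          (n.choose j : ℝ) * ((n : ℝ) - 2 * j) ^ k := by
  have hcount : ∑ S : Finset (Fin n), ((n : ℝ) - 2 * S.card) ^ k
      = ∑ j ∈ Finset.range (n + 1), (n.choose j : ℝ) * ((n : ℝ) - 2 * j) ^ k := by
    rw [← Finset.powerset_univ, Finset.sum_powerset_apply_card (fun j => ((n : ℝ) - 2 * j) ^ k),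
      Finset.card_univ, Fintype.card_fin]
    simp only [nsmul_eq_mul]
  rw [← hcount, ← two_pow_mul_adjMatrix_hypercube_pow_apply_self]
  field_simp
end

section
/- Let n ≥ 1 and q ≥ 4. If −1 is not an adjacency eigenvalue of the Lee graph G(n,q), then there exists no perfect Lee code C ⊆ (ℤ/qℤ)^n of size at least 2 with minimum Lee distance 3. -/
open Finset Polynomial

/-- The Lee ball of radius `r` around `c`. -/
def leeBall {n q : ℕ} (c : Fin n → ZMod q) (r : ℕ) : Set (Fin n → ZMod q) :=
  {b | leeDist b c ≤ r}

/-- The code `C` has minimum Lee distance `d`. -/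
def HasMinLeeDist {n q : ℕ} (C : Set (Fin n → ZMod q)) (d : ℕ) : Prop :=
  IsLeast {e : ℕ | ∃ c ∈ C, ∃ c' ∈ C, c ≠ c' ∧ e = leeDist c c'} d

/-- `C` is a perfect Lee code: its packing radius (largest `r` with pairwise disjoint
Lee balls of radius `r` around codewords) equals its covering radius (smallest `r` such
that these balls cover the whole space). -/
def IsPerfectLeeCode {n q : ℕ} (C : Set (Fin n → ZMod q)) : Prop :=
  ∃ r : ℕ,
    IsGreatest {s : ℕ | ∀ c ∈ C, ∀ c' ∈ C, c ≠ c' →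
      Disjoint (leeBall c s) (leeBall c' s)} r ∧
    IsLeast {s : ℕ | ∀ b : Fin n → ZMod q, ∃ c ∈ C, leeDist b c ≤ s} r


section
variable {q : ℕ} [NeZero q]

def fL (q : ℕ) [NeZero q] (x : ZMod q) : ℕ := min x.val (q - x.val)

lemma fL_eq_zero_iff (x : ZMod q) : fL q x = 0 ↔ x = 0 := by
  have h := ZMod.val_lt x
  unfold fL
  rw [← ZMod.val_eq_zero]
  omega

lemma fL_neg (x : ZMod q) : fL q (-x) = fL q x := by
  by_cases hx : x = 0
  · subst hx; simp
  · haveI : NeZero x := ⟨hx⟩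
    have h := ZMod.val_lt x
    have h0 : x.val ≠ 0 := fun h => hx ((ZMod.val_eq_zero x).1 h)
    unfold fL
    rw [ZMod.val_neg_of_ne_zero]
    omega

lemma fL_add_le (x y : ZMod q) : fL q (x + y) ≤ fL q x + fL q y := by
  have h1 := ZMod.natAbs_valMinAbs_add_le x y
  have h2 := Int.natAbs_add_le x.valMinAbs y.valMinAbs
  simpa only [fL, ← ZMod.valMinAbs_natAbs_eq_min] using h1.trans h2

lemma fL_one (hq : 3 ≤ q) : fL q 1 = 1 := by
  haveI : Fact (1 < q) := ⟨by omega⟩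
  unfold fL
  rw [ZMod.val_one]
  omega

lemma val_neg_one' (hq : 3 ≤ q) : (-1 : ZMod q).val = q - 1 := by
  haveI : Fact (1 < q) := ⟨by omega⟩
  haveI : NeZero (1 : ZMod q) := ⟨one_ne_zero⟩
  rw [ZMod.val_neg_of_ne_zero, ZMod.val_one]

lemma fL_eq_one_iff (hq : 3 ≤ q) (x : ZMod q) : fL q x = 1 ↔ x = 1 ∨ x = -1 := by
  haveI : Fact (1 < q) := ⟨by omega⟩
  constructor
  · intro h
    have hv := ZMod.val_lt x
    have : x.val = 1 ∨ x.val = q - 1 := by unfold fL at h; omega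
    rcases this with h1 | h1
    · left
      apply ZMod.val_injective
      rw [h1, ZMod.val_one]
    · right
      apply ZMod.val_injective
      rw [h1, val_neg_one' hq]
  · rintro (rfl | rfl)
    · exact fL_one hq
    · rw [show (-1 : ZMod q) = -(1) from rfl, fL_neg]; exact fL_one hq

lemma fL_step (hq : 3 ≤ q) (x : ZMod q) (hx : x ≠ 0) :
    ∃ d : ZMod q, fL q d = 1 ∧ fL q (x - d) + 1 = fL q x := by
  haveI : Fact (1 < q) := ⟨by omega⟩
  have hv := ZMod.val_lt x
  have hv0 : x.val ≠ 0 := fun h => hx ((ZMod.val_eq_zero x).1 h)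
  by_cases hc : x.val ≤ q - x.val
  · refine ⟨1, fL_one hq, ?_⟩
    have h1 : (x - 1).val = x.val - 1 := by
      rw [ZMod.val_sub (by rw [ZMod.val_one]; omega), ZMod.val_one]
    unfold fL
    rw [h1]
    omega
  · refine ⟨-1, by rw [fL_neg]; exact fL_one hq, ?_⟩
    rw [sub_neg_eq_add]
    by_cases hq1 : x.val = q - 1
    · have hx1 : x = -1 := by
        apply ZMod.val_injective; rw [hq1, val_neg_one' hq]
      rw [hx1, neg_add_cancel, fL_neg, fL_one hq]
      simp [fL]
    · have h1 : (x + 1).val = x.val + 1 := by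
        rw [ZMod.val_add, ZMod.val_one, Nat.mod_eq_of_lt (by omega)]
      unfold fL
      rw [h1]
      omega

end

section lee
variable {n q : ℕ} [NeZero q]

lemma leeDist_eq (b c : Fin n → ZMod q) : leeDist b c = ∑ i, fL q (b i - c i) := rfl

lemma leeDist_comm (b c : Fin n → ZMod q) : leeDist b c = leeDist c b := by
  rw [leeDist_eq, leeDist_eq]
  refine Finset.sum_congr rfl fun i _ => ?_
  rw [show c i - b i = -(b i - c i) by ring, fL_neg]

lemma leeDist_triangle (a b c : Fin n → ZMod q) :
    leeDist a c ≤ leeDist a b + leeDist b c := by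
  rw [leeDist_eq, leeDist_eq, leeDist_eq, ← Finset.sum_add_distrib]
  refine Finset.sum_le_sum fun i _ => ?_
  have h := fL_add_le (a i - b i) (b i - c i)
  rwa [sub_add_sub_cancel] at h

lemma leeDist_eq_zero_iff (b c : Fin n → ZMod q) : leeDist b c = 0 ↔ b = c := by
  rw [leeDist_eq, Finset.sum_eq_zero_iff]
  constructor
  · intro h
    funext i
    have := (fL_eq_zero_iff _).1 (h i (Finset.mem_univ i))
    exact sub_eq_zero.1 this
  · rintro rfl i _
    simp [fL]

lemma leeDist_add_right (a b e : Fin n → ZMod q) :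
    leeDist (a + e) (b + e) = leeDist a b := by
  rw [leeDist_eq, leeDist_eq]
  refine Finset.sum_congr rfl fun i _ => ?_
  congr 1
  simp only [Pi.add_apply]
  ring

lemma leeGraph_adj_iff (hq : 3 ≤ q) (u v : Fin n → ZMod q) :
    (leeGraph n q).Adj u v ↔ leeDist u v = 1 := by
  constructor
  · rintro ⟨hne, i, hi, hj⟩
    rw [leeDist_eq]
    rw [Finset.sum_eq_single_of_mem i (Finset.mem_univ i)]
    · rcases hi with hi | hi
      · rw [show u i - v i = 1 by rw [hi]; ring]
        exact fL_one hq
      · rw [show u i - v i = -1 by rw [hi]; ring, fL_neg]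
        exact fL_one hq
    · intro j _ hji
      rw [(fL_eq_zero_iff _).2 (sub_eq_zero.2 (hj j hji))]
  · intro h
    rw [leeDist_eq] at h
    obtain ⟨i, -, hi⟩ := Finset.exists_ne_zero_of_sum_ne_zero (by omega :
      ∑ i, fL q (u i - v i) ≠ 0)
    have hsplit : ∑ j, fL q (u j - v j)
        = fL q (u i - v i) + ∑ j ∈ Finset.univ.erase i, fL q (u j - v j) :=
      (Finset.add_sum_erase _ _ (Finset.mem_univ i)).symm
    have hrest : ∑ j ∈ Finset.univ.erase i, fL q (u j - v j) = 0 := by omega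
    have hone : fL q (u i - v i) = 1 := by omega
    have huv : u i ≠ v i := fun he => hi ((fL_eq_zero_iff _).2 (sub_eq_zero.2 he))
    refine ⟨fun he => huv (congrFun he i), i, ?_, ?_⟩
    · rcases (fL_eq_one_iff hq _).1 hone with h1 | h1
      · left; rw [← sub_add_cancel (u i) (v i), h1]; ring
      · right; rw [← sub_add_cancel (u i) (v i), h1]; ring
    · intro j hji
      have : fL q (u j - v j) = 0 :=
        (Finset.sum_eq_zero_iff.1 hrest) j (Finset.mem_erase.2 ⟨hji, Finset.mem_univ j⟩)
      exact sub_eq_zero.1 ((fL_eq_zero_iff _).1 this)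

lemma exists_mid (hq : 3 ≤ q) {c c' : Fin n → ZMod q} (h3 : leeDist c c' = 3) :
    ∃ b : Fin n → ZMod q, leeDist b c ≤ 2 ∧ leeDist b c' ≤ 2 := by
  rw [leeDist_eq] at h3
  obtain ⟨i, -, hi⟩ := Finset.exists_ne_zero_of_sum_ne_zero (by omega :
    ∑ j, fL q (c j - c' j) ≠ 0)
  have hx : c i - c' i ≠ 0 := fun he => hi ((fL_eq_zero_iff _).2 he)
  obtain ⟨d, hd1, hd2⟩ := fL_step hq (c i - c' i) hx
  refine ⟨Function.update c i (c i - d), ?_, ?_⟩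
  · rw [leeDist_eq, Finset.sum_eq_single_of_mem i (Finset.mem_univ i)]
    · rw [Function.update_self, show c i - d - c i = -d by ring, fL_neg, hd1]
      omega
    · intro j _ hji
      rw [Function.update_of_ne hji, (fL_eq_zero_iff _).2 (sub_eq_zero.2 rfl)]
  · have hsplit : ∑ j, fL q (c j - c' j)
        = fL q (c i - c' i) + ∑ j ∈ Finset.univ.erase i, fL q (c j - c' j) :=
      (Finset.add_sum_erase _ _ (Finset.mem_univ i)).symm
    rw [leeDist_eq,
      show (∑ j, fL q (Function.update c i (c i - d) j - c' j))
        = fL q (Function.update c i (c i - d) i - c' i)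
          + ∑ j ∈ Finset.univ.erase i, fL q (Function.update c i (c i - d) j - c' j)
        from (Finset.add_sum_erase _ _ (Finset.mem_univ i)).symm,
      Finset.sum_congr rfl (fun j hj =>
        by rw [Function.update_of_ne (Finset.ne_of_mem_erase hj)])]
    rw [Function.update_self, show c i - d - c' i = c i - c' i - d by ring]
    omega

end lee


section code
variable {n q : ℕ} [NeZero q]

lemma unique_cover (hq : 3 ≤ q) {C : Set (Fin n → ZMod q)}
    (hmin : HasMinLeeDist C 3) (hperf : IsPerfectLeeCode C) :
    ∀ b : Fin n → ZMod q, ∃! c, c ∈ C ∧ leeDist b c ≤ 1 := by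
  obtain ⟨r, ⟨hrpack, hrub⟩, hrcov, hrlb⟩ := hperf
  have hlow : ∀ c ∈ C, ∀ c' ∈ C, c ≠ c' → 3 ≤ leeDist c c' := fun c hc c' hc' hne =>
    hmin.2 ⟨c, hc, c', hc', hne, rfl⟩
  have pack1 : ∀ c ∈ C, ∀ c' ∈ C, c ≠ c' → Disjoint (leeBall c 1) (leeBall c' 1) := by
    intro c hc c' hc' hne
    rw [Set.disjoint_left]
    intro b hb hb'
    have h1 : leeDist b c ≤ 1 := hb
    have h2 : leeDist b c' ≤ 1 := hb'
    have := leeDist_triangle c b c'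
    rw [leeDist_comm c b] at this
    have := hlow c hc c' hc' hne
    omega
  have hr1 : 1 ≤ r := hrub pack1
  have hr2 : r ≤ 1 := by
    by_contra hr
    obtain ⟨c, hc, c', hc', hne, he⟩ := hmin.1
    obtain ⟨b, hb, hb'⟩ := exists_mid hq he.symm
    have hd := hrpack c hc c' hc' hne
    rw [Set.disjoint_left] at hd
    exact hd (show leeDist b c ≤ r by omega) (show leeDist b c' ≤ r by omega)
  have hrr : r = 1 := le_antisymm hr2 hr1
  intro b
  obtain ⟨c, hc, hcb⟩ := hrcov b
  rw [hrr] at hcb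
  refine ⟨c, ⟨hc, hcb⟩, ?_⟩
  rintro c₂ ⟨hc₂, hcb₂⟩
  by_contra hne
  have hd := pack1 c₂ hc₂ c hc hne
  rw [Set.disjoint_left] at hd
  exact hd (show leeDist b c₂ ≤ 1 from hcb₂) (show leeDist b c ≤ 1 from hcb)

open Classical in
lemma mulVec_ind (hq : 3 ≤ q) (S : Set (Fin n → ZMod q))
    (hU : ∀ b : Fin n → ZMod q, ∃! c, c ∈ S ∧ leeDist b c ≤ 1) (b : Fin n → ZMod q) :
    (SimpleGraph.adjMatrix ℝ (leeGraph n q)).mulVec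
        (fun v => if v ∈ S then (1 : ℝ) else 0) b
      = 1 - (if b ∈ S then (1 : ℝ) else 0) := by
  rw [SimpleGraph.adjMatrix_mulVec_apply]
  rw [Finset.sum_boole]
  obtain ⟨c, ⟨hcS, hc1⟩, huniq⟩ := hU b
  by_cases hb : b ∈ S
  · have hcb : c = b := Eq.symm <| huniq b ⟨hb, by rw [(leeDist_eq_zero_iff b b).2 rfl]; omega⟩
    have : Finset.filter (· ∈ S) ((leeGraph n q).neighborFinset b) = ∅ := by
      rw [Finset.filter_eq_empty_iff]
      intro u hu huS
      have hadj : (leeGraph n q).Adj b u := (SimpleGraph.mem_neighborFinset _ _ _).1 hu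
      have h1 : leeDist b u = 1 := (leeGraph_adj_iff hq b u).1 hadj
      have : u = b := (huniq u ⟨huS, le_of_eq h1⟩).trans hcb
      rw [this, (leeDist_eq_zero_iff b b).2 rfl] at h1
      omega
    rw [this]
    simp [hb]
  · have hne : leeDist b c ≠ 0 := fun h0 => hb ((leeDist_eq_zero_iff b c).1 h0 ▸ hcS)
    have h1 : leeDist b c = 1 := by omega
    have : Finset.filter (· ∈ S) ((leeGraph n q).neighborFinset b) = {c} := by
      apply Finset.eq_singleton_iff_unique_mem.2
      constructor
      · rw [Finset.mem_filter, SimpleGraph.mem_neighborFinset]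
        exact ⟨(leeGraph_adj_iff hq b c).2 h1, hcS⟩
      · intro u hu
        rw [Finset.mem_filter, SimpleGraph.mem_neighborFinset] at hu
        exact huniq u ⟨hu.2, le_of_eq ((leeGraph_adj_iff hq b u).1 hu.1)⟩
    rw [this]
    simp [hb]

end code

/-- for `n ≥ 1`, `q ≥ 4`, if `−1` is not an adjacency eigenvalue of the
Lee graph `G(n,q)`, then there is no perfect Lee code `C ⊆ (ℤ/qℤ)^n` of size at least `2`
with minimum Lee distance `3`. -/
theorem stmt18 (n q : ℕ) [NeZero q] (hn : 1 ≤ n) (hq : 4 ≤ q)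
    (h : ¬ IsAdjEigenvalue (leeGraph n q) (-1)) :
    ¬ ∃ C : Set (Fin n → ZMod q), 2 ≤ C.ncard ∧ HasMinLeeDist C 3 ∧ IsPerfectLeeCode C := by
  rintro ⟨C, hcard, hmin, hperf⟩
  classical
  apply h
  have hq3 : 3 ≤ q := by omega
  haveI : Fact (1 < q) := ⟨by omega⟩
  set i0 : Fin n := ⟨0, hn⟩
  set e : Fin n → ZMod q := fun j => if j = i0 then 1 else 0 with he
  -- the shifted code
  set S' : Set (Fin n → ZMod q) := {b | b - e ∈ C} with hS'
  have hU : ∀ b : Fin n → ZMod q, ∃! c, c ∈ C ∧ leeDist b c ≤ 1 :=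
    unique_cover hq3 hmin hperf
  have hU' : ∀ b : Fin n → ZMod q, ∃! c, c ∈ S' ∧ leeDist b c ≤ 1 := by
    intro b
    obtain ⟨c, ⟨hc, hc1⟩, huniq⟩ := hU (b - e)
    refine ⟨c + e, ⟨?_, ?_⟩, ?_⟩
    · show c + e - e ∈ C
      rwa [add_sub_cancel_right]
    · rw [show b = (b - e) + e by ring, leeDist_add_right]
      exact hc1
    · rintro c₂ ⟨hc₂, hcb₂⟩
      have : c₂ - e = c := by
        apply huniq
        refine ⟨hc₂, ?_⟩
        have := leeDist_add_right (b - e) (c₂ - e) e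
        rw [sub_add_cancel, sub_add_cancel] at this
        omega
      rw [← this]; ring
  set x : (Fin n → ZMod q) → ℝ := fun v => if v ∈ C then 1 else 0 with hx
  set x' : (Fin n → ZMod q) → ℝ := fun v => if v ∈ S' then 1 else 0 with hx'
  refine ⟨x - x', ?_, ?_⟩
  · -- nonzero: take a codeword c; then c ∈ C but c ∉ S'
    obtain ⟨c, hc, -⟩ := hmin.1
    intro hzero
    have hcS' : c ∉ S' := by
      intro hcS'
      have hmem : c - e ∈ C := hcS'
      have hne : c ≠ c - e := by
        intro hee
        have : e = 0 := by
          have := sub_eq_self.1 hee.symm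
          exact this
        have : e i0 = 0 := by rw [this]; rfl
        simp only [he, if_pos rfl] at this
        exact one_ne_zero this
      have h3 : 3 ≤ leeDist c (c - e) := hmin.2 ⟨c, hc, c - e, hmem, hne, rfl⟩
      have h1 : leeDist c (c - e) = 1 := by
        rw [leeDist_eq, Finset.sum_eq_single_of_mem i0 (Finset.mem_univ i0)]
        · rw [show c i0 - (c - e) i0 = e i0 by simp,
            show e i0 = 1 from if_pos rfl]
          exact fL_one hq3
        · intro j _ hj
          rw [show c j - (c - e) j = e j by simp,
            show e j = 0 from if_neg hj, (fL_eq_zero_iff _).2 rfl]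
      omega
    have := congrFun hzero c
    simp only [Pi.sub_apply, Pi.zero_apply, hx, hx', if_pos hc, if_neg hcS'] at this
    norm_num at this
  · funext b
    have h1 := mulVec_ind hq3 C hU b
    have h2 := mulVec_ind hq3 S' hU' b
    rw [Matrix.mulVec_sub]
    simp only [Pi.sub_apply, Pi.smul_apply, smul_eq_mul]
    rw [show ((SimpleGraph.adjMatrix ℝ (leeGraph n q)).mulVec x) b = 1 - x b from h1,
      show ((SimpleGraph.adjMatrix ℝ (leeGraph n q)).mulVec x') b = 1 - x' b from h2]
    ring
end
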